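/- arXiv:2112.14409 — 2 statements merged into one kernel-verified Lean document; each statement's English description precedes it below -/
import Mathlib

section
/- (i) There exists C > 0, depending only on λ̄ and α, such that for every f : ℝ^d → ℝ and all M, H ≥ 0 satisfying |f(z)| ≤ M·ρ(z) for all z ∈ ℝ^d and |f(z)/ρ(z) − f(z′)/ρ(z′)| ≤ H·|z−z′|^α whenever 0 < |z−z′| ≤ 1, and for all y, y′ ∈ ℝ^d with 0 < |y−y′| ≤ 1 and ⟨Sy,y⟩ ≤ ⟨Sy′,y′⟩, one has |f(y) − f(y′)|/ρ(y′) ≤ (C·M + H)·|y−y′|^α. (ii) There exists C > 0, depending only on λ̄ and α, such that for every f : ℝ^d → ℝ and all M, H ≥ 0 satisfying |f(z)| ≤ M·ρ(z) for all z ∈ ℝ^d and |f(z) − f(z′)| ≤ H·|z−z′|^α whenever 0 < |z−z′| ≤ 1, and for all y, y′ ∈ ℝ^d with 0 < |y−y′| ≤ 1, one has |f(y)/ρ(y) − f(y′)/ρ(y′)| ≤ C·M·|y−y′|^α + H·|y−y′|^α·min(ρ(y)^{−1}, ρ(y′)^{−1}). -/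
open scoped ENNReal
open Set

noncomputable section

/-- Euclidean space `ℝ^d`. -/
abbrev Rd (d : ℕ) : Type := EuclideanSpace ℝ (Fin d)

namespace Nonlocal

/-! ### Spatial and temporal derivative operators -/

/-- First-order spatial partial derivative in the coordinate direction `i`. -/
def pd1 {d : ℕ} (i : Fin d) (f : Rd d → ℝ) : Rd d → ℝ :=
  fun y => fderiv ℝ f y (EuclideanSpace.single i 1)

/-- Iterated spatial partial derivative `∂_I` along the multi-index `I` of length `j`. -/
def mderiv {d : ℕ} : (j : ℕ) → (Fin j → Fin d) → (Rd d → ℝ) → Rd d → ℝ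
  | 0, _, f => f
  | j + 1, I, f => pd1 (I 0) (mderiv j (fun k => I k.succ) f)

/-- Partial derivative in the (running) time variable of a function of `(s, y)`. -/
def dS {d : ℕ} (ψ : ℝ → Rd d → ℝ) : ℝ → Rd d → ℝ :=
  fun s y => deriv (fun s' => ψ s' y) s

/-- Mixed partial derivative `∂_s^h ∂_y^I ψ`. -/
def mixD {d : ℕ} (h j : ℕ) (I : Fin j → Fin d) (ψ : ℝ → Rd d → ℝ) : ℝ → Rd d → ℝ :=
  dS^[h] (fun s y => mderiv j I (fun y' => ψ s y') y)

/-! ### Parabolic Hölder norms -/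

/-- Supremum of `|φ|` over `[a,b] × ℝ^d`. -/
def supA {d : ℕ} (a b : ℝ) (φ : ℝ → Rd d → ℝ) : ℝ≥0∞ :=
  ⨆ s ∈ Icc a b, ⨆ y : Rd d, ENNReal.ofReal |φ s y|

/-- Spatial Hölder seminorm `⟨φ⟩_y^{(β)}` (with truncation parameter `ρ₀`). -/
def hY {d : ℕ} (ρ₀ β a b : ℝ) (φ : ℝ → Rd d → ℝ) : ℝ≥0∞ :=
  ⨆ s ∈ Icc a b, ⨆ y : Rd d, ⨆ y' : Rd d,
    ⨆ (_ : 0 < dist y y' ∧ dist y y' ≤ ρ₀),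
      ENNReal.ofReal (|φ s y - φ s y'| / dist y y' ^ β)

/-- Temporal Hölder seminorm `⟨φ⟩_s^{(β)}` (with truncation parameter `ρ₀`). -/
def hS {d : ℕ} (ρ₀ β a b : ℝ) (φ : ℝ → Rd d → ℝ) : ℝ≥0∞ :=
  ⨆ s ∈ Icc a b, ⨆ s' ∈ Icc a b, ⨆ y : Rd d,
    ⨆ (_ : 0 < |s - s'| ∧ |s - s'| ≤ ρ₀),
      ENNReal.ofReal (|φ s y - φ s' y| / |s - s'| ^ β)

/-- The parabolic Hölder norm `|ψ|^{(l)}_{[a,b] × ℝ^d}` with parabolic scaling `2r`. -/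
def pNorm {d : ℕ} (r : ℕ) (ρ₀ l a b : ℝ) (ψ : ℝ → Rd d → ℝ) : ℝ≥0∞ :=
  (∑ h ∈ Finset.range (⌊l⌋₊ + 1), ∑ j ∈ Finset.range (⌊l⌋₊ + 1),
    if 2 * r * h + j ≤ ⌊l⌋₊ then ∑ I : Fin j → Fin d, supA a b (mixD h j I ψ) else 0) +
  (∑ h ∈ Finset.range (⌊l⌋₊ + 1), ∑ j ∈ Finset.range (⌊l⌋₊ + 1),
    if 2 * r * h + j = ⌊l⌋₊ then
      ∑ I : Fin j → Fin d, hY ρ₀ (l - (⌊l⌋₊ : ℝ)) a b (mixD h j I ψ)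
    else 0) +
  (∑ h ∈ Finset.range (⌊l⌋₊ + 1), ∑ j ∈ Finset.range (⌊l⌋₊ + 1),
    if 0 < l - ((2 * r * h + j : ℕ) : ℝ) ∧ l - ((2 * r * h + j : ℕ) : ℝ) < (2 * r : ℝ) then
      ∑ I : Fin j → Fin d,
        hS ρ₀ ((l - ((2 * r * h + j : ℕ) : ℝ)) / (2 * r : ℝ)) a b (mixD h j I ψ)
    else 0)

/-- Parabolic Hölder norm of an `ℝ^m`-valued function (sum over the components). -/
def pNormV {d m : ℕ} (r : ℕ) (ρ₀ l a b : ℝ) (ψ : ℝ → Rd d → Fin m → ℝ) : ℝ≥0∞ :=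
  ∑ i : Fin m, pNorm r ρ₀ l a b (fun s y => ψ s y i)

/-- Partial derivative in the external time parameter `t`. -/
def dT {d m : ℕ} (u : ℝ → ℝ → Rd d → Fin m → ℝ) : ℝ → ℝ → Rd d → Fin m → ℝ :=
  fun t s y b => deriv (fun t' => u t' s y b) t

/-- Partial derivative in the running time variable `s`. -/
def dSu {d m : ℕ} (u : ℝ → ℝ → Rd d → Fin m → ℝ) : ℝ → ℝ → Rd d → Fin m → ℝ :=
  fun t s y b => deriv (fun s' => u t s' y b) s

/-- Partial `t`-derivative of a scalar function of `(t,s,y)`. -/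
def dT3 {d : ℕ} (w : ℝ → ℝ → Rd d → ℝ) : ℝ → ℝ → Rd d → ℝ :=
  fun t s y => deriv (fun t' => w t' s y) t

/-- The norm `[u]^{(l)}_{[0,δ]}`. -/
def normTheta {d m : ℕ} (r : ℕ) (ρ₀ l δ : ℝ) (u : ℝ → ℝ → Rd d → Fin m → ℝ) : ℝ≥0∞ :=
  ⨆ t ∈ Icc (0 : ℝ) δ, pNormV r ρ₀ l 0 t (u t)

/-- The norm `‖u‖^{(l)}_{[0,δ]}`. -/
def normOmega {d m : ℕ} (r : ℕ) (ρ₀ l δ : ℝ) (u : ℝ → ℝ → Rd d → Fin m → ℝ) : ℝ≥0∞ :=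
  ⨆ t ∈ Icc (0 : ℝ) δ, (pNormV r ρ₀ l 0 t (u t) + pNormV r ρ₀ l 0 t (dT u t))

/-- The triangular time-space region `Δ[0,δ] × ℝ^d`. -/
def DeltaDom (d : ℕ) (δ : ℝ) : Set (ℝ × ℝ × Rd d) :=
  {p | 0 ≤ p.2.1 ∧ p.2.1 ≤ p.1 ∧ p.1 ≤ δ}

/-- Membership in the space `Θ^{(l)}_{[0,δ]}`. -/
def memTheta {d m : ℕ} (r : ℕ) (ρ₀ l δ : ℝ) (u : ℝ → ℝ → Rd d → Fin m → ℝ) : Prop :=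
  ContinuousOn (fun p : ℝ × ℝ × Rd d => fun b => u p.1 p.2.1 p.2.2 b) (DeltaDom d δ) ∧
  normTheta r ρ₀ l δ u < ⊤

/-- Membership in the space `Ω^{(l)}_{[0,δ]}` (continuously differentiable in `t`). -/
def memOmega {d m : ℕ} (r : ℕ) (ρ₀ l δ : ℝ) (u : ℝ → ℝ → Rd d → Fin m → ℝ) : Prop :=
  ContinuousOn (fun p : ℝ × ℝ × Rd d => fun b => u p.1 p.2.1 p.2.2 b) (DeltaDom d δ) ∧
  (∀ (t s : ℝ) (y : Rd d) (b : Fin m), (t, s, y) ∈ DeltaDom d δ →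
    DifferentiableAt ℝ (fun t' => u t' s y b) t) ∧
  ContinuousOn (fun p : ℝ × ℝ × Rd d => fun b => dT u p.1 p.2.1 p.2.2 b) (DeltaDom d δ) ∧
  normOmega r ρ₀ l δ u < ⊤

/-- Scalar version of `memOmega`. -/
def memOmegaS {d : ℕ} (r : ℕ) (ρ₀ l δ : ℝ) (w : ℝ → ℝ → Rd d → ℝ) : Prop :=
  memOmega (m := 1) r ρ₀ l δ (fun t s y _ => w t s y)

/-- An initial datum `g = g(t,y)` regarded as an element of `Ω^{(l)}_{[0,δ]}` (constant in `s`). -/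
def memOmegaInit {d m : ℕ} (r : ℕ) (ρ₀ l δ : ℝ) (g : ℝ → Rd d → Fin m → ℝ) : Prop :=
  memOmega r ρ₀ l δ (fun t _ y => g t y)

/-- Pointwise agreement of two functions on `Δ[0,δ] × ℝ^d`. -/
def AgreeOn {d m : ℕ} (δ : ℝ) (u v : ℝ → ℝ → Rd d → Fin m → ℝ) : Prop :=
  ∀ (t s : ℝ) (y : Rd d) (b : Fin m), 0 ≤ s → s ≤ t → t ≤ δ → u t s y b = v t s y b


/-! ### Nonlocal linear systems -/

/-- Coefficient family `A^{aI}_b(t,s,y)`, indexed by components `a, b` and multi-indices `I`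
(of every length `j`; only `j ≤ 2r` is ever used). -/
abbrev Coeff (d m : ℕ) :=
  Fin m → (j : ℕ) → (Fin j → Fin d) → Fin m → ℝ → ℝ → Rd d → ℝ

/-- The nonlocal linear operator `L` of order `2r`. -/
def Lop {d m : ℕ} (r : ℕ) (A B : Coeff d m) (u : ℝ → ℝ → Rd d → Fin m → ℝ) :
    ℝ → ℝ → Rd d → Fin m → ℝ := fun t s y a =>
  (∑ j ∈ Finset.range (2 * r + 1), ∑ I : Fin j → Fin d, ∑ b : Fin m,
    A a j I b t s y * mderiv j I (fun y' => u t s y' b) y) +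
  (∑ j ∈ Finset.range (2 * r + 1), ∑ I : Fin j → Fin d, ∑ b : Fin m,
    B a j I b t s y * mderiv j I (fun y' => u s s y' b) y)

/-- Strong ellipticity of the nonlocal linear operator with coefficients `A, B`. -/
def StronglyElliptic {d m : ℕ} (r : ℕ) (T : ℝ) (A B : Coeff d m) : Prop :=
  ∃ lam : ℝ, 0 < lam ∧ ∀ (t s : ℝ) (y ξ : Rd d) (v : Fin m → ℝ),
    0 ≤ s → s ≤ t → t ≤ T →
    (lam * ‖ξ‖ ^ (2 * r) * (∑ a, v a ^ 2) ≤
      (-1 : ℝ) ^ (r - 1) * ∑ a : Fin m, ∑ b : Fin m, ∑ I : Fin (2 * r) → Fin d,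
        A a (2 * r) I b t s y * (∏ k, ξ (I k)) * v a * v b) ∧
    (lam * ‖ξ‖ ^ (2 * r) * (∑ a, v a ^ 2) ≤
      (-1 : ℝ) ^ (r - 1) * ∑ a : Fin m, ∑ b : Fin m, ∑ I : Fin (2 * r) → Fin d,
        (A a (2 * r) I b t s y + B a (2 * r) I b t s y) * (∏ k, ξ (I k)) * v a * v b)

/-- All the coefficients `A^{aI}_b` with `|I| ≤ 2r` belong to `Ω^{(l)}_{[0,δ]}`. -/
def CoeffOmega {d m : ℕ} (r : ℕ) (ρ₀ l δ : ℝ) (A : Coeff d m) : Prop :=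
  ∀ (a b : Fin m) (j : ℕ), j ≤ 2 * r → ∀ I : Fin j → Fin d,
    memOmegaS r ρ₀ l δ (A a j I b)

/-- `u` solves the nonlocal linear system `∂_s u = Lu + f`, `u(t,0,y) = g(t,y)`
on `Δ[0,T] × ℝ^d`. -/
def SolvesLinear {d m : ℕ} (r : ℕ) (T : ℝ) (A B : Coeff d m)
    (f : ℝ → ℝ → Rd d → Fin m → ℝ) (g : ℝ → Rd d → Fin m → ℝ)
    (u : ℝ → ℝ → Rd d → Fin m → ℝ) : Prop :=
  (∀ (t s : ℝ) (y : Rd d), 0 ≤ s → s ≤ t → t ≤ T → ∀ a : Fin m,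
    dSu u t s y a = Lop r A B u t s y a + f t s y a) ∧
  (∀ t : ℝ, 0 ≤ t → t ≤ T → ∀ (y : Rd d) (a : Fin m), u t 0 y a = g t y a)

/-- The pair `(u, v)` solves the induced system on `Δ[0,T] × ℝ^d`. -/
def SolvesInduced {d m : ℕ} (r : ℕ) (T : ℝ) (A B : Coeff d m)
    (f : ℝ → ℝ → Rd d → Fin m → ℝ) (g : ℝ → Rd d → Fin m → ℝ)
    (u v : ℝ → ℝ → Rd d → Fin m → ℝ) : Prop :=
  (∀ (t s : ℝ) (y : Rd d), 0 ≤ s → s ≤ t → t ≤ T → ∀ a : Fin m,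
    dSu u t s y a =
      (∑ j ∈ Finset.range (2 * r + 1), ∑ I : Fin j → Fin d, ∑ b : Fin m,
        (A a j I b t s y + B a j I b t s y) * mderiv j I (fun y' => u t s y' b) y) -
      (∑ j ∈ Finset.range (2 * r + 1), ∑ I : Fin j → Fin d, ∑ b : Fin m,
        B a j I b t s y * ∫ θ in s..t, mderiv j I (fun y' => v θ s y' b) y) +
      f t s y a) ∧
  (∀ (t s : ℝ) (y : Rd d), 0 ≤ s → s ≤ t → t ≤ T → ∀ a : Fin m,
    dSu v t s y a =
      (∑ j ∈ Finset.range (2 * r + 1), ∑ I : Fin j → Fin d, ∑ b : Fin m,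
        A a j I b t s y * mderiv j I (fun y' => v t s y' b) y) +
      (∑ j ∈ Finset.range (2 * r + 1), ∑ I : Fin j → Fin d, ∑ b : Fin m,
        (dT3 (A a j I b) t s y + dT3 (B a j I b) t s y) *
          mderiv j I (fun y' => u t s y' b) y) -
      (∑ j ∈ Finset.range (2 * r + 1), ∑ I : Fin j → Fin d, ∑ b : Fin m,
        dT3 (B a j I b) t s y * ∫ θ in s..t, mderiv j I (fun y' => v θ s y' b) y) +
      dT f t s y a) ∧
  (∀ t : ℝ, 0 ≤ t → t ≤ T → ∀ (y : Rd d) (a : Fin m),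
    u t 0 y a = g t y a ∧ v t 0 y a = deriv (fun t' => g t' y a) t)


/-! ### Nonlocal fully nonlinear systems -/

/-- Multi-indices of length `≤ 2r`. -/
abbrev MIdx (d r : ℕ) := Σ j : Fin (2 * r + 1), Fin (j : ℕ) → Fin d

/-- Coordinates of the argument space `Z`: a local block (`0`) and a diagonal block (`1`),
each indexed by a multi-index `|I| ≤ 2r` and a component `b`. -/
abbrev ZIdx (d m r : ℕ) := Fin 2 × MIdx d r × Fin m

/-- The finite-dimensional argument space `Z` of pairs `z = (w, w̄)`. -/
abbrev Zsp (d m r : ℕ) := ZIdx d m r → ℝ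

/-- Euclidean norm on `Z`. -/
def znorm {d m r : ℕ} (z : Zsp d m r) : ℝ := Real.sqrt (∑ c, z c ^ 2)

/-- The open ball `B(z₀, R)` in `Z`. -/
def ZBall {d m r : ℕ} (z0 : Zsp d m r) (R : ℝ) : Set (Zsp d m r) :=
  {z | znorm (z - z0) < R}

/-- The derivative tuple `(((∂_I u^b)(t,s,y))_{I,b}, ((∂_I u^b)(s,s,y))_{I,b}) ∈ Z`. -/
def derivPair {d m : ℕ} (r : ℕ) (u : ℝ → ℝ → Rd d → Fin m → ℝ) (t s : ℝ) (y : Rd d) :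
    Zsp d m r :=
  fun c => mderiv (c.2.1.1 : ℕ) c.2.1.2
    (fun y' => u (if c.1 = 0 then t else s) s y' c.2.2) y

/-- The derivative tuple of an initial datum `g`:
`(((∂_I g^b)(t,y))_{I,b}, ((∂_I g^b)(s,y))_{I,b}) ∈ Z`. -/
def gPair {d m : ℕ} (r : ℕ) (g : ℝ → Rd d → Fin m → ℝ) (t s : ℝ) (y : Rd d) :
    Zsp d m r :=
  derivPair r (fun t' _ y' => g t' y') t s y

/-- Composition `F(u)(t,s,y)` of a nonlinearity with the derivative tuple of `u`. -/
def Fapp {d m : ℕ} (r : ℕ) (F : ℝ → ℝ → Rd d → Zsp d m r → Fin m → ℝ)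
    (u : ℝ → ℝ → Rd d → Fin m → ℝ) : ℝ → ℝ → Rd d → Fin m → ℝ :=
  fun t s y a => F t s y (derivPair r u t s y) a

/-- Partial derivative of a nonlinearity in the `z`-coordinate `c`. -/
def dz {d m r : ℕ} (G : ℝ → ℝ → Rd d → Zsp d m r → ℝ) (c : ZIdx d m r) :
    ℝ → ℝ → Rd d → Zsp d m r → ℝ :=
  fun t s y z => fderiv ℝ (G t s y) z (Pi.single c 1)

/-- Partial derivative of a nonlinearity in `t`. -/
def dtZ {d m r : ℕ} (G : ℝ → ℝ → Rd d → Zsp d m r → ℝ) :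
    ℝ → ℝ → Rd d → Zsp d m r → ℝ :=
  fun t s y z => deriv (fun t' => G t' s y z) t

/-- The family of functions `F, ∂_t F, ∂_I F, ∂_I F̄, ∂²_{tI} F, ∂²_{tI} F̄, ∂²_{IJ} F,
∂²_{IJ} F̄` appearing in the regularity conditions (ii)–(iii). -/
def FFam {d m : ℕ} (r : ℕ) (F : ℝ → ℝ → Rd d → Zsp d m r → Fin m → ℝ) :
    Set (ℝ → ℝ → Rd d → Zsp d m r → ℝ) :=
  {G | (∃ a, G = fun t s y z => F t s y z a) ∨
    (∃ a, G = dtZ (fun t s y z => F t s y z a)) ∨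
    (∃ a c, G = dz (fun t s y z => F t s y z a) c) ∨
    (∃ a c, G = dtZ (dz (fun t s y z => F t s y z a) c)) ∨
    (∃ a c c', c'.1 = (0 : Fin 2) ∧ G = dz (dz (fun t s y z => F t s y z a) c) c')}

/-- The `z`-coordinate of top order `|I| = 2r` in block `blk` with indices `(I, b)`. -/
def topCoord {d m : ℕ} (r : ℕ) (blk : Fin 2) (I : Fin (2 * r) → Fin d) (b : Fin m) :
    ZIdx d m r :=
  (blk, ⟨(⟨2 * r, Nat.lt_succ_self _⟩ : Fin (2 * r + 1)), I⟩, b)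

/-- The quadratic form of the principal symbol (with or without the diagonal block). -/
def ellipSum {d m : ℕ} (r : ℕ) (F : ℝ → ℝ → Rd d → Zsp d m r → Fin m → ℝ)
    (withBar : Bool) (t s : ℝ) (y : Rd d) (z : Zsp d m r) (ξ : Rd d)
    (v : Fin m → ℝ) : ℝ :=
  ∑ a : Fin m, ∑ b : Fin m, ∑ I : Fin (2 * r) → Fin d,
    (dz (fun t' s' y' z' => F t' s' y' z' a) (topCoord r 0 I b) t s y z +
      (if withBar then
        dz (fun t' s' y' z' => F t' s' y' z' a) (topCoord r 1 I b) t s y z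
      else 0)) * (∏ k, ξ (I k)) * v a * v b

/-- The standing conditions (i)–(iii) on a nonlinearity `F`, with prescribed constants:
`lam` (ellipticity), `K` (Hölder bound), `L` (Lipschitz bound), over a given `z`-domain. -/
def StandingNLC {d m : ℕ} (r : ℕ) (T ρ₀ α : ℝ) (Zdom : Set (Zsp d m r))
    (lam : ℝ) (K : ℝ≥0∞) (L : ℝ)
    (F : ℝ → ℝ → Rd d → Zsp d m r → Fin m → ℝ) : Prop :=
  (∀ (t s : ℝ) (y : Rd d), 0 ≤ s → s ≤ t → t ≤ T → ∀ z ∈ Zdom,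
    ∀ (ξ : Rd d) (v : Fin m → ℝ),
      (lam * ‖ξ‖ ^ (2 * r) * (∑ a, v a ^ 2) ≤
        (-1 : ℝ) ^ (r - 1) * ellipSum r F false t s y z ξ v) ∧
      (lam * ‖ξ‖ ^ (2 * r) * (∑ a, v a ^ 2) ≤
        (-1 : ℝ) ^ (r - 1) * ellipSum r F true t s y z ξ v)) ∧
  (∀ G ∈ FFam r F, ∀ t : ℝ, 0 ≤ t → t ≤ T → ∀ z ∈ Zdom,
    pNorm r ρ₀ α 0 t (fun s y => G t s y z) ≤ K) ∧
  (∀ G ∈ FFam r F, ∀ (t s : ℝ) (y : Rd d), 0 ≤ s → s ≤ t → t ≤ T →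
    ∀ z₁ ∈ Zdom, ∀ z₂ ∈ Zdom, |G t s y z₁ - G t s y z₂| ≤ L * znorm (z₁ - z₂))

/-- The standing conditions (i)–(iii) on a nonlinearity `F` over a given `z`-domain. -/
def StandingNL {d m : ℕ} (r : ℕ) (T ρ₀ α : ℝ) (Zdom : Set (Zsp d m r))
    (F : ℝ → ℝ → Rd d → Zsp d m r → Fin m → ℝ) : Prop :=
  ∃ (lam : ℝ) (K : ℝ≥0∞) (L : ℝ), 0 < lam ∧ K < ⊤ ∧ 0 < L ∧
    StandingNLC r T ρ₀ α Zdom lam K L F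

/-- `u` solves the nonlocal fully nonlinear system `∂_s u = F(u)`, `u(t,0,y) = g(t,y)`
on `Δ[0,δ] × ℝ^d` (with `F` defined on the whole space `Z`). -/
def SolvesNLF {d m : ℕ} (r : ℕ) (δ : ℝ) (F : ℝ → ℝ → Rd d → Zsp d m r → Fin m → ℝ)
    (g : ℝ → Rd d → Fin m → ℝ) (u : ℝ → ℝ → Rd d → Fin m → ℝ) : Prop :=
  (∀ (t s : ℝ) (y : Rd d), 0 ≤ s → s ≤ t → t ≤ δ → ∀ a : Fin m,
    dSu u t s y a = F t s y (derivPair r u t s y) a) ∧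
  (∀ t : ℝ, 0 ≤ t → t ≤ δ → ∀ (y : Rd d) (a : Fin m), u t 0 y a = g t y a)

/-- `u` solves the nonlocal fully nonlinear system on `Δ[0,δ] × ℝ^d`, with derivative
tuple ranging in the open ball `B(z₀, R₀)`. -/
def SolvesNLBall {d m : ℕ} (r : ℕ) (δ : ℝ) (z0 : Zsp d m r) (R₀ : ℝ)
    (F : ℝ → ℝ → Rd d → Zsp d m r → Fin m → ℝ)
    (g : ℝ → Rd d → Fin m → ℝ) (u : ℝ → ℝ → Rd d → Fin m → ℝ) : Prop :=
  (∀ (t s : ℝ) (y : Rd d), 0 ≤ s → s ≤ t → t ≤ δ →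
    znorm (derivPair r u t s y - z0) < R₀ ∧
    ∀ a : Fin m, dSu u t s y a = F t s y (derivPair r u t s y) a) ∧
  (∀ t : ℝ, 0 ≤ t → t ≤ δ → ∀ (y : Rd d) (a : Fin m), u t 0 y a = g t y a)

/-- As `SolvesNLBall`, but with the closed ball `B̄(z₀, R₀)`. -/
def SolvesNLBallC {d m : ℕ} (r : ℕ) (δ : ℝ) (z0 : Zsp d m r) (R₀ : ℝ)
    (F : ℝ → ℝ → Rd d → Zsp d m r → Fin m → ℝ)
    (g : ℝ → Rd d → Fin m → ℝ) (u : ℝ → ℝ → Rd d → Fin m → ℝ) : Prop :=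
  (∀ (t s : ℝ) (y : Rd d), 0 ≤ s → s ≤ t → t ≤ δ →
    znorm (derivPair r u t s y - z0) ≤ R₀ ∧
    ∀ a : Fin m, dSu u t s y a = F t s y (derivPair r u t s y) a) ∧
  (∀ t : ℝ, 0 ≤ t → t ≤ δ → ∀ (y : Rd d) (a : Fin m), u t 0 y a = g t y a)

/-- Time reversal `v(t,s,y) = u(T−t, T−s, y)`. -/
def revT {d m : ℕ} (T : ℝ) (u : ℝ → ℝ → Rd d → Fin m → ℝ) :
    ℝ → ℝ → Rd d → Fin m → ℝ :=
  fun t s y b => u (T - t) (T - s) y b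


/-! ### Nonlocal quasilinear systems -/

/-- Multi-indices of length `≤ 2r − 1`. -/
abbrev QIdx (d r : ℕ) := Σ j : Fin (2 * r), Fin (j : ℕ) → Fin d

/-- The space `W` of tuples `w = (w^b_I)` with `|I| ≤ 2r − 1`. -/
abbrev Wsp (d m r : ℕ) := QIdx d r × Fin m → ℝ

/-- Euclidean norm on `W`. -/
def wnorm {d m r : ℕ} (w : Wsp d m r) : ℝ := Real.sqrt (∑ c, w c ^ 2)

/-- Tuple of spatial derivatives of `u` of order `≤ 2r − 1` at `(t,s,y)`. -/
def wTuple {d m : ℕ} (r : ℕ) (u : ℝ → ℝ → Rd d → Fin m → ℝ) (t s : ℝ) (y : Rd d) :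
    Wsp d m r :=
  fun c => mderiv (c.1.1 : ℕ) c.1.2 (fun y' => u t s y' c.2) y

/-- Top-order coefficients `A^{aI}_b(s,y)` with `|I| = 2r`. -/
abbrev QCoeff (d m r : ℕ) := Fin m → (Fin (2 * r) → Fin d) → Fin m → ℝ → Rd d → ℝ

/-- `u` solves the nonlocal quasilinear system on `Δ[0,T] × ℝ^d`. -/
def SolvesQL {d m : ℕ} (r : ℕ) (T : ℝ) (A2 : QCoeff d m r)
    (Q : ℝ → ℝ → Rd d → Wsp d m r → Wsp d m r → Fin m → ℝ)
    (g : ℝ → Rd d → Fin m → ℝ) (u : ℝ → ℝ → Rd d → Fin m → ℝ) : Prop :=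
  (∀ (t s : ℝ) (y : Rd d), 0 ≤ s → s ≤ t → t ≤ T → ∀ a : Fin m,
    dSu u t s y a =
      (∑ I : Fin (2 * r) → Fin d, ∑ b : Fin m,
        A2 a I b s y * mderiv (2 * r) I (fun y' => u t s y' b) y) +
      Q t s y (wTuple r u t s y) (wTuple r u s s y) a) ∧
  (∀ t : ℝ, 0 ≤ t → t ≤ T → ∀ (y : Rd d) (a : Fin m), u t 0 y a = g t y a)

/-- Partial derivative of `Q` in a coordinate of the local argument. -/
def dLoc {d m r : ℕ} (G : ℝ → ℝ → Rd d → Wsp d m r → Wsp d m r → ℝ)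
    (c : QIdx d r × Fin m) : ℝ → ℝ → Rd d → Wsp d m r → Wsp d m r → ℝ :=
  fun t s y w wb => fderiv ℝ (fun w' => G t s y w' wb) w (Pi.single c 1)

/-- Partial derivative of `Q` in a coordinate of the diagonal argument. -/
def dDiag {d m r : ℕ} (G : ℝ → ℝ → Rd d → Wsp d m r → Wsp d m r → ℝ)
    (c : QIdx d r × Fin m) : ℝ → ℝ → Rd d → Wsp d m r → Wsp d m r → ℝ :=
  fun t s y w wb => fderiv ℝ (fun wb' => G t s y w wb') wb (Pi.single c 1)

/-- Partial derivative of `Q` in `t`. -/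
def dtQ {d m r : ℕ} (G : ℝ → ℝ → Rd d → Wsp d m r → Wsp d m r → ℝ) :
    ℝ → ℝ → Rd d → Wsp d m r → Wsp d m r → ℝ :=
  fun t s y w wb => deriv (fun t' => G t' s y w wb) t

/-- The family consisting of `Q`, its first-order partial derivatives in `t` and in the
local and diagonal argument tuples, and its second-order partial derivatives in the pairs
`(t, local)`, `(t, diagonal)`, `(local, local)`, `(local, diagonal)`, `(diagonal, local)`. -/
def QFam {d m r : ℕ} (Q : ℝ → ℝ → Rd d → Wsp d m r → Wsp d m r → Fin m → ℝ) :
    Set (ℝ → ℝ → Rd d → Wsp d m r → Wsp d m r → ℝ) :=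
  {G | (∃ a, G = fun t s y w wb => Q t s y w wb a) ∨
    (∃ a, G = dtQ (fun t s y w wb => Q t s y w wb a)) ∨
    (∃ a c, G = dLoc (fun t s y w wb => Q t s y w wb a) c) ∨
    (∃ a c, G = dDiag (fun t s y w wb => Q t s y w wb a) c) ∨
    (∃ a c, G = dtQ (dLoc (fun t s y w wb => Q t s y w wb a) c)) ∨
    (∃ a c, G = dtQ (dDiag (fun t s y w wb => Q t s y w wb a) c)) ∨
    (∃ a c c', G = dLoc (dLoc (fun t s y w wb => Q t s y w wb a) c) c') ∨
    (∃ a c c', G = dDiag (dLoc (fun t s y w wb => Q t s y w wb a) c) c') ∨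
    (∃ a c c', G = dLoc (dDiag (fun t s y w wb => Q t s y w wb a) c) c')}

/-! ### Weighted norms and spaces -/

/-- The quadratic form `⟨S y, y⟩`. -/
def quadS {d : ℕ} (S : Matrix (Fin d) (Fin d) ℝ) (y : Rd d) : ℝ :=
  ∑ i, ∑ j, S i j * y i * y j

/-- The exponential weight `ρ(y) = exp(1 + ⟨S y, y⟩^{1/2})`. -/
def wt {d : ℕ} (S : Matrix (Fin d) (Fin d) ℝ) (y : Rd d) : ℝ :=
  Real.exp (1 + Real.sqrt (quadS S y))

/-- `S` is symmetric positive definite with eigenvalues in `[lam1, lam2]`, `lam1 > 0`. -/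
def SpecIn {d : ℕ} (S : Matrix (Fin d) (Fin d) ℝ) (lam1 lam2 : ℝ) : Prop :=
  S.IsSymm ∧ 0 < lam1 ∧ lam1 ≤ lam2 ∧
    ∀ y : Rd d, lam1 * ‖y‖ ^ 2 ≤ quadS S y ∧ quadS S y ≤ lam2 * ‖y‖ ^ 2

/-- Division by the weight. -/
def wdiv {d : ℕ} (S : Matrix (Fin d) (Fin d) ℝ) (φ : ℝ → Rd d → ℝ) : ℝ → Rd d → ℝ :=
  fun s y => φ s y / wt S y

/-- The weighted parabolic Hölder norm `|ψ|^{2,(l)}_{ρ,[a,b] × ℝ^d}` (all derivatives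
divided by the weight). -/
def pNormW {d : ℕ} (S : Matrix (Fin d) (Fin d) ℝ) (r : ℕ) (ρ₀ l a b : ℝ)
    (ψ : ℝ → Rd d → ℝ) : ℝ≥0∞ :=
  (∑ h ∈ Finset.range (⌊l⌋₊ + 1), ∑ j ∈ Finset.range (⌊l⌋₊ + 1),
    if 2 * r * h + j ≤ ⌊l⌋₊ then
      ∑ I : Fin j → Fin d, supA a b (wdiv S (mixD h j I ψ)) else 0) +
  (∑ h ∈ Finset.range (⌊l⌋₊ + 1), ∑ j ∈ Finset.range (⌊l⌋₊ + 1),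
    if 2 * r * h + j = ⌊l⌋₊ then
      ∑ I : Fin j → Fin d, hY ρ₀ (l - (⌊l⌋₊ : ℝ)) a b (wdiv S (mixD h j I ψ))
    else 0) +
  (∑ h ∈ Finset.range (⌊l⌋₊ + 1), ∑ j ∈ Finset.range (⌊l⌋₊ + 1),
    if 0 < l - ((2 * r * h + j : ℕ) : ℝ) ∧ l - ((2 * r * h + j : ℕ) : ℝ) < (2 * r : ℝ) then
      ∑ I : Fin j → Fin d,
        hS ρ₀ ((l - ((2 * r * h + j : ℕ) : ℝ)) / (2 * r : ℝ)) a b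
          (wdiv S (mixD h j I ψ))
    else 0)

/-- The `min`-weighted spatial Hölder seminorm appearing in the third weighted norm. -/
def hYmin {d : ℕ} (S : Matrix (Fin d) (Fin d) ℝ) (ρ₀ β a b : ℝ)
    (φ : ℝ → Rd d → ℝ) : ℝ≥0∞ :=
  ⨆ s ∈ Icc a b, ⨆ y : Rd d, ⨆ y' : Rd d,
    ⨆ (_ : 0 < dist y y' ∧ dist y y' ≤ ρ₀),
      ENNReal.ofReal (|φ s y - φ s y'| / dist y y' ^ β * min (wt S y)⁻¹ (wt S y')⁻¹)

/-- The weighted parabolic Hölder norm `|ψ|^{3,(l)}_{ρ,[a,b] × ℝ^d}`. -/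
def pNormW3 {d : ℕ} (S : Matrix (Fin d) (Fin d) ℝ) (r : ℕ) (ρ₀ l a b : ℝ)
    (ψ : ℝ → Rd d → ℝ) : ℝ≥0∞ :=
  (∑ h ∈ Finset.range (⌊l⌋₊ + 1), ∑ j ∈ Finset.range (⌊l⌋₊ + 1),
    if 2 * r * h + j ≤ ⌊l⌋₊ then
      ∑ I : Fin j → Fin d, supA a b (wdiv S (mixD h j I ψ)) else 0) +
  (∑ h ∈ Finset.range (⌊l⌋₊ + 1), ∑ j ∈ Finset.range (⌊l⌋₊ + 1),
    if 2 * r * h + j = ⌊l⌋₊ then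
      ∑ I : Fin j → Fin d, hYmin S ρ₀ (l - (⌊l⌋₊ : ℝ)) a b (mixD h j I ψ)
    else 0) +
  (∑ h ∈ Finset.range (⌊l⌋₊ + 1), ∑ j ∈ Finset.range (⌊l⌋₊ + 1),
    if 0 < l - ((2 * r * h + j : ℕ) : ℝ) ∧ l - ((2 * r * h + j : ℕ) : ℝ) < (2 * r : ℝ) then
      ∑ I : Fin j → Fin d,
        hS ρ₀ ((l - ((2 * r * h + j : ℕ) : ℝ)) / (2 * r : ℝ)) a b
          (wdiv S (mixD h j I ψ))
    else 0)

/-- Weighted vector norm. -/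
def pNormVW {d m : ℕ} (S : Matrix (Fin d) (Fin d) ℝ) (r : ℕ) (ρ₀ l a b : ℝ)
    (ψ : ℝ → Rd d → Fin m → ℝ) : ℝ≥0∞ :=
  ∑ i : Fin m, pNormW S r ρ₀ l a b (fun s y => ψ s y i)

/-- The weighted norm `[u]^{(l)}_{ρ,[0,δ]}`. -/
def normThetaW {d m : ℕ} (S : Matrix (Fin d) (Fin d) ℝ) (r : ℕ) (ρ₀ l δ : ℝ)
    (u : ℝ → ℝ → Rd d → Fin m → ℝ) : ℝ≥0∞ :=
  ⨆ t ∈ Icc (0 : ℝ) δ, pNormVW S r ρ₀ l 0 t (u t)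

/-- The weighted norm `‖u‖^{(l)}_{ρ,[0,δ]}`. -/
def normOmegaW {d m : ℕ} (S : Matrix (Fin d) (Fin d) ℝ) (r : ℕ) (ρ₀ l δ : ℝ)
    (u : ℝ → ℝ → Rd d → Fin m → ℝ) : ℝ≥0∞ :=
  ⨆ t ∈ Icc (0 : ℝ) δ, (pNormVW S r ρ₀ l 0 t (u t) + pNormVW S r ρ₀ l 0 t (dT u t))

/-- Membership in the weighted space `Θ^{(l)}_{ρ,[0,δ]}`. -/
def memThetaW {d m : ℕ} (S : Matrix (Fin d) (Fin d) ℝ) (r : ℕ) (ρ₀ l δ : ℝ)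
    (u : ℝ → ℝ → Rd d → Fin m → ℝ) : Prop :=
  ContinuousOn (fun p : ℝ × ℝ × Rd d => fun b => u p.1 p.2.1 p.2.2 b) (DeltaDom d δ) ∧
  normThetaW S r ρ₀ l δ u < ⊤

/-- Membership in the weighted space `Ω^{(l)}_{ρ,[0,δ]}`. -/
def memOmegaW {d m : ℕ} (S : Matrix (Fin d) (Fin d) ℝ) (r : ℕ) (ρ₀ l δ : ℝ)
    (u : ℝ → ℝ → Rd d → Fin m → ℝ) : Prop :=
  ContinuousOn (fun p : ℝ × ℝ × Rd d => fun b => u p.1 p.2.1 p.2.2 b) (DeltaDom d δ) ∧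
  (∀ (t s : ℝ) (y : Rd d) (b : Fin m), (t, s, y) ∈ DeltaDom d δ →
    DifferentiableAt ℝ (fun t' => u t' s y b) t) ∧
  ContinuousOn (fun p : ℝ × ℝ × Rd d => fun b => dT u p.1 p.2.1 p.2.2 b) (DeltaDom d δ) ∧
  normOmegaW S r ρ₀ l δ u < ⊤

/-- An initial datum as an element of the weighted space `Ω^{(l)}_{ρ,[0,δ]}`. -/
def memOmegaInitW {d m : ℕ} (S : Matrix (Fin d) (Fin d) ℝ) (r : ℕ) (ρ₀ l δ : ℝ)
    (g : ℝ → Rd d → Fin m → ℝ) : Prop :=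
  memOmegaW S r ρ₀ l δ (fun t _ y => g t y)

/-- The pair `(F, g)` is appropriate (Definition of appropriateness, conditions (a)–(e)). -/
def Appropriate {d m : ℕ} (r : ℕ) (T ρ₀ α : ℝ) (S : Matrix (Fin d) (Fin d) ℝ)
    (F : ℝ → ℝ → Rd d → Zsp d m r → Fin m → ℝ)
    (g : ℝ → Rd d → Fin m → ℝ) : Prop :=
  ∃ δ R C lam : ℝ, 0 < δ ∧ δ ≤ T ∧ 0 < R ∧ 0 < C ∧ 0 < lam ∧
    -- (c) ellipticity at the derivative tuple of `g`
    (∀ (t s : ℝ) (y : Rd d), 0 ≤ s → s ≤ t → t ≤ δ → ∀ (ξ : Rd d) (v : Fin m → ℝ),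
      (lam * ‖ξ‖ ^ (2 * r) * (∑ a, v a ^ 2) ≤
        (-1 : ℝ) ^ (r - 1) * ellipSum r F false t s y (gPair r g t 0 y) ξ v) ∧
      (lam * ‖ξ‖ ^ (2 * r) * (∑ a, v a ^ 2) ≤
        (-1 : ℝ) ^ (r - 1) * ellipSum r F true t s y (gPair r g t 0 y) ξ v)) ∧
    ∀ u : ℝ → ℝ → Rd d → Fin m → ℝ,
      memOmegaW S r ρ₀ ((2 * r : ℝ) + α) δ u →
      (∀ t : ℝ, 0 ≤ t → t ≤ δ → ∀ (y : Rd d) (b : Fin m), u t 0 y b = g t y b) →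
      normOmegaW S r ρ₀ ((2 * r : ℝ) + α) δ (fun t s y b => u t s y b - g t y b) ≤
        ENNReal.ofReal R →
      -- (a)
      ((memOmegaW S r ρ₀ α δ (Fapp r F u) ∧ memThetaW S r ρ₀ α δ (dT (Fapp r F u))) ∧
      -- (b)
      (∀ (a : Fin m) (c : ZIdx d m r),
        memOmegaS r ρ₀ α δ (fun t s y =>
          dz (fun t' s' y' z' => F t' s' y' z' a) c t s y (derivPair r u t s y))) ∧
      -- (d)
      (∀ (a : Fin m) (c : ZIdx d m r) (t s s' : ℝ) (y y' : Rd d),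
        0 ≤ s → s ≤ t → 0 ≤ s' → s' ≤ t → t ≤ δ →
        (|dz (fun t' s' y'' z' => F t' s' y'' z' a) c t s' y' (derivPair r u t s' y') -
            dz (fun t' s' y'' z' => F t' s' y'' z' a) c t s y (derivPair r u t s y)| ≤
          C * (|s - s'| ^ (α / 2) + dist y y' ^ α)) ∧
        (|dtZ (dz (fun t' s' y'' z' => F t' s' y'' z' a) c) t s' y'
              (derivPair r u t s' y') -
            dtZ (dz (fun t' s' y'' z' => F t' s' y'' z' a) c) t s y
              (derivPair r u t s y)| ≤
          C * (|s - s'| ^ (α / 2) + dist y y' ^ α))) ∧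
      -- (e)
      (∀ (a cc : Fin m) (c : ZIdx d m r) (J : MIdx d r) (t s s' : ℝ) (y y' : Rd d),
        0 ≤ s → s ≤ t → 0 ≤ s' → s' ≤ t → t ≤ δ →
        |dz (dz (fun t' s' y'' z' => F t' s' y'' z' a) c) ((0 : Fin 2), J, cc) t s' y'
            (derivPair r u t s' y') *
            mderiv (J.1 : ℕ) J.2 (fun y'' => dT u t s' y'' cc) y' -
          dz (dz (fun t' s' y'' z' => F t' s' y'' z' a) c) ((0 : Fin 2), J, cc) t s y
            (derivPair r u t s y) *
            mderiv (J.1 : ℕ) J.2 (fun y'' => dT u t s y'' cc) y| ≤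
          C * (|s - s'| ^ (α / 2) + dist y y' ^ α)))

/-!
Cauchy–Schwarz for the form of `S` makes `y ↦ ⟨Sy,y⟩^{1/2}` a seminorm, bounded by `√λ̄ |y|`;
hence `log ρ` is `√λ̄`-Lipschitz and `1 - ρ(y)/ρ(y') ≤ √λ̄ |y - y'| ≤ √λ̄ |y - y'|^α` when
`|y - y'| ≤ 1`. Both estimates follow by splitting `f(y) - f(y')`, resp.
`f(y)/ρ(y) - f(y')/ρ(y')`, into a Hölder difference and `f` times a difference of weights,
choosing `y` to be the point of smaller weight.
-/

theorem _root_.LinearMap.BilinForm.sqrt_apply_add_le {M : Type*} [AddCommGroup M] [Module ℝ M]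
    {B : LinearMap.BilinForm ℝ M} (hs : ∀ x, 0 ≤ B x x) (hB : LinearMap.IsSymm B) (x y : M) :
    √(B (x + y) (x + y)) ≤ √(B x x) + √(B y y) := by
  have hxy : B x y ≤ √(B x x) * √(B y y) := by
    rw [← Real.sqrt_mul (hs x)]
    exact (le_abs_self _).trans (Real.abs_le_sqrt (B.apply_sq_le_of_symm hs hB x y))
  have hyx : B y x = B x y := (hB.eq x y).symm
  rw [Real.sqrt_le_left (by positivity), add_sq, Real.sq_sqrt (hs x), Real.sq_sqrt (hs y),
    LinearMap.map_add₂, map_add, map_add, hyx]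
  linarith

theorem quadS_eq_toBilin' {d : ℕ} (S : Matrix (Fin d) (Fin d) ℝ) (y : Rd d) :
    quadS S y = S.toBilin' (WithLp.ofLp y) (WithLp.ofLp y) := by
  simp only [quadS, Matrix.toBilin'_apply]
  exact Finset.sum_congr rfl fun i _ => Finset.sum_congr rfl fun j _ => by ring

section SpecIn

variable {d : ℕ} {S : Matrix (Fin d) (Fin d) ℝ} {lam1 lam2 : ℝ} {y y' : Rd d}

theorem SpecIn.quadS_nonneg (hS : SpecIn S lam1 lam2) (y : Rd d) : 0 ≤ quadS S y :=
  (mul_nonneg hS.2.1.le (sq_nonneg _)).trans (hS.2.2.2 y).1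

theorem SpecIn.sqrt_quadS_sub_le (hS : SpecIn S lam1 lam2) (y y' : Rd d) :
    √(quadS S y') - √(quadS S y) ≤ √lam2 * dist y y' := by
  have hB : LinearMap.IsSymm S.toBilin' :=
    LinearMap.BilinForm.isSymm_iff.mp (Matrix.isSymm_toBilin'_iff_isSymm.mpr hS.1)
  have hs : ∀ x, 0 ≤ S.toBilin' x x := fun x => by
    simpa [quadS_eq_toBilin'] using hS.quadS_nonneg (WithLp.toLp 2 x)
  have htri := LinearMap.BilinForm.sqrt_apply_add_le hs hB (WithLp.ofLp y) (WithLp.ofLp (y' - y))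
  have hupper : √(quadS S (y' - y)) ≤ √lam2 * dist y y' := by
    rw [dist_comm, dist_eq_norm, ← Real.sqrt_sq (norm_nonneg (y' - y)),
      ← Real.sqrt_mul' _ (sq_nonneg _)]
    exact Real.sqrt_le_sqrt (hS.2.2.2 _).2
  simp only [quadS_eq_toBilin', WithLp.ofLp_sub] at htri hupper ⊢
  rw [add_sub_cancel] at htri
  linarith

theorem wt_pos (S : Matrix (Fin d) (Fin d) ℝ) (y : Rd d) : 0 < wt S y :=
  Real.exp_pos _

theorem wt_le_wt_of_quadS_le (h : quadS S y ≤ quadS S y') : wt S y ≤ wt S y' :=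
  Real.exp_le_exp.mpr (add_le_add_right (Real.sqrt_le_sqrt h) 1)

theorem SpecIn.one_sub_wt_div_wt_le (hS : SpecIn S lam1 lam2) (y y' : Rd d) :
    1 - wt S y / wt S y' ≤ √lam2 * dist y y' :=
  calc 1 - wt S y / wt S y' = 1 - Real.exp (√(quadS S y) - √(quadS S y')) := by
        rw [wt, wt, ← Real.exp_sub, add_sub_add_left_eq_sub]
    _ ≤ √(quadS S y') - √(quadS S y) := by
        linarith [Real.add_one_le_exp (√(quadS S y) - √(quadS S y'))]
    _ ≤ √lam2 * dist y y' := hS.sqrt_quadS_sub_le y y'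

end SpecIn

section WeightedDifferences

variable {a b p p' M h ε : ℝ}

theorem abs_sub_div_le_of_div_sub_div_le (hp : 0 < p) (hpp' : p ≤ p') (hb : |b| ≤ M * p')
    (hab : |a / p - b / p'| ≤ h) (hε : 1 - p / p' ≤ ε) :
    |a - b| / p' ≤ M * ε + h := by
  have hp' : 0 < p' := hp.trans_le hpp'
  have hratio : 0 ≤ 1 - p / p' := sub_nonneg.mpr ((div_le_one hp').mpr hpp')
  have hsplit : a - b = (a / p - b / p') * p - b * (1 - p / p') := by
    field_simp; ring
  rw [div_le_iff₀ hp']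
  calc |a - b| ≤ |a / p - b / p'| * p + |b| * (1 - p / p') := by
        rw [hsplit]
        refine (abs_sub _ _).trans_eq ?_
        rw [abs_mul, abs_mul, abs_of_pos hp, abs_of_nonneg hratio]
    _ ≤ h * p' + M * p' * ε := by
        gcongr
        · exact (abs_nonneg _).trans hab
        · exact (abs_nonneg _).trans hb
    _ = (M * ε + h) * p' := by ring

theorem abs_div_sub_div_le_of_sub_le (hp : 0 < p) (hpp' : p ≤ p') (hM : 0 ≤ M)
    (ha : |a| ≤ M * p) (hab : |a - b| ≤ h) (hε : 1 - p / p' ≤ ε) :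
    |a / p - b / p'| ≤ M * ε + h * min p⁻¹ p'⁻¹ := by
  have hp' : 0 < p' := hp.trans_le hpp'
  have hinv : 0 ≤ p⁻¹ - p'⁻¹ := sub_nonneg.mpr (inv_anti₀ hp hpp')
  have hsplit : a / p - b / p' = a * (p⁻¹ - p'⁻¹) + (a - b) * p'⁻¹ := by ring
  rw [min_eq_right (inv_anti₀ hp hpp'), hsplit]
  calc |a * (p⁻¹ - p'⁻¹) + (a - b) * p'⁻¹|
      ≤ |a| * (p⁻¹ - p'⁻¹) + |a - b| * p'⁻¹ := by
        refine (abs_add_le _ _).trans_eq ?_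
        rw [abs_mul, abs_mul, abs_of_nonneg hinv, abs_of_pos (inv_pos.mpr hp')]
    _ ≤ M * p * (p⁻¹ - p'⁻¹) + h * p'⁻¹ := by gcongr
    _ = M * (1 - p / p') + h * p'⁻¹ := by field_simp
    _ ≤ M * ε + h * p'⁻¹ := by gcongr

end WeightedDifferences

theorem stmt10_weighted_pointwise_estimates_general
    (d : ℕ) (α : ℝ) (hα1 : α < 1) (lam2 : ℝ) :
    ∃ C : ℝ, 0 < C ∧
      (∀ (S : Matrix (Fin d) (Fin d) ℝ) (lam1 : ℝ), SpecIn S lam1 lam2 →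
        ∀ (f : Rd d → ℝ) (M H : ℝ), 0 ≤ M → 0 ≤ H →
        (∀ z : Rd d, |f z| ≤ M * wt S z) →
        (∀ z z' : Rd d, 0 < dist z z' → dist z z' ≤ 1 →
          |f z / wt S z - f z' / wt S z'| ≤ H * dist z z' ^ α) →
        ∀ y y' : Rd d, 0 < dist y y' → dist y y' ≤ 1 → quadS S y ≤ quadS S y' →
          |f y - f y'| / wt S y' ≤ (C * M + H) * dist y y' ^ α) ∧
      (∀ (S : Matrix (Fin d) (Fin d) ℝ) (lam1 : ℝ), SpecIn S lam1 lam2 →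
        ∀ (f : Rd d → ℝ) (M H : ℝ), 0 ≤ M → 0 ≤ H →
        (∀ z : Rd d, |f z| ≤ M * wt S z) →
        (∀ z z' : Rd d, 0 < dist z z' → dist z z' ≤ 1 →
          |f z - f z'| ≤ H * dist z z' ^ α) →
        ∀ y y' : Rd d, 0 < dist y y' → dist y y' ≤ 1 →
          |f y / wt S y - f y' / wt S y'| ≤
            C * M * dist y y' ^ α +
              H * dist y y' ^ α * min (wt S y)⁻¹ (wt S y')⁻¹) := by
  set C := √(max lam2 1)
  have hratio : ∀ (S : Matrix (Fin d) (Fin d) ℝ) (lam1 : ℝ), SpecIn S lam1 lam2 →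
      ∀ y y' : Rd d, dist y y' ≤ 1 → 1 - wt S y / wt S y' ≤ C * dist y y' ^ α :=
    fun S lam1 hS y y' hd1 =>
    calc 1 - wt S y / wt S y' ≤ √lam2 * dist y y' := hS.one_sub_wt_div_wt_le y y'
      _ ≤ C * dist y y' ^ α := by
        gcongr
        · exact Real.sqrt_le_sqrt (le_max_left lam2 1)
        · exact Real.self_le_rpow_of_le_one dist_nonneg hd1 hα1.le
  refine ⟨C, by positivity, ?_, ?_⟩
  · intro S lam1 hS f M H _ _ hf hhol y y' hd0 hd1 hq
    exact (abs_sub_div_le_of_div_sub_div_le (wt_pos S y) (wt_le_wt_of_quadS_le hq) (hf y')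
      (hhol y y' hd0 hd1) (hratio S lam1 hS y y' hd1)).trans_eq (by ring)
  · intro S lam1 hS f M H hM _ hf hhol y y' hd0 hd1
    wlog hq : quadS S y ≤ quadS S y' generalizing y y'
    · rw [abs_sub_comm, min_comm, dist_comm]
      exact this y' y (dist_comm y y' ▸ hd0) (dist_comm y y' ▸ hd1) (le_of_not_ge hq)
    exact (abs_div_sub_div_le_of_sub_le (wt_pos S y) (wt_le_wt_of_quadS_le hq) hM (hf y)
      (hhol y y' hd0 hd1) (hratio S lam1 hS y y' hd1)).trans_eq (by ring)

/-- Pointwise weighted Hölder estimates for the exponential weight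
`ρ(y) = exp(1 + ⟨Sy,y⟩^{1/2})`, with a constant depending only on `λ̄` and `α`:
(i) `|f(y) − f(y′)|/ρ(y′) ≤ (C M + H)|y−y′|^α` whenever `|f| ≤ M ρ`, `f/ρ` is
`(H,α)`-Hölder, `0 < |y−y′| ≤ 1` and `⟨Sy,y⟩ ≤ ⟨Sy′,y′⟩`;
(ii) `|f(y)/ρ(y) − f(y′)/ρ(y′)| ≤ C M |y−y′|^α + H |y−y′|^α min(ρ(y)⁻¹, ρ(y′)⁻¹)`
whenever `|f| ≤ M ρ`, `f` is `(H,α)`-Hölder and `0 < |y−y′| ≤ 1`. -/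
theorem stmt10_weighted_pointwise_estimates
    (d : ℕ) (hd : 0 < d) (α : ℝ) (hα0 : 0 < α) (hα1 : α < 1) (lam2 : ℝ) :
    ∃ C : ℝ, 0 < C ∧
      (∀ (S : Matrix (Fin d) (Fin d) ℝ) (lam1 : ℝ), SpecIn S lam1 lam2 →
        ∀ (f : Rd d → ℝ) (M H : ℝ), 0 ≤ M → 0 ≤ H →
        (∀ z : Rd d, |f z| ≤ M * wt S z) →
        (∀ z z' : Rd d, 0 < dist z z' → dist z z' ≤ 1 →
          |f z / wt S z - f z' / wt S z'| ≤ H * dist z z' ^ α) →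
        ∀ y y' : Rd d, 0 < dist y y' → dist y y' ≤ 1 → quadS S y ≤ quadS S y' →
          |f y - f y'| / wt S y' ≤ (C * M + H) * dist y y' ^ α) ∧
      (∀ (S : Matrix (Fin d) (Fin d) ℝ) (lam1 : ℝ), SpecIn S lam1 lam2 →
        ∀ (f : Rd d → ℝ) (M H : ℝ), 0 ≤ M → 0 ≤ H →
        (∀ z : Rd d, |f z| ≤ M * wt S z) →
        (∀ z z' : Rd d, 0 < dist z z' → dist z z' ≤ 1 →
          |f z - f z'| ≤ H * dist z z' ^ α) →
        ∀ y y' : Rd d, 0 < dist y y' → dist y y' ≤ 1 →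
          |f y / wt S y - f y' / wt S y'| ≤
            C * M * dist y y' ^ α +
              H * dist y y' ^ α * min (wt S y)⁻¹ (wt S y')⁻¹) :=
  stmt10_weighted_pointwise_estimates_general d α hα1 lam2

end Nonlocal
end
end

section
/- Suppose φ̄ = (φ̄^1,…,φ̄^m) : [0,T] → (0,∞)^m is continuous and satisfies, for every a ∈ {1,…,m} and every s ∈ [0,T], the nonlinear integral equation φ̄^a(s) = exp(∫_s^T [k^a(s,τ) − Σ_{b≤m} β·φ̄^b(τ)^{1/(β−1)}] dτ)·ḡ^a(s) + ∫_s^T exp(∫_s^σ [k^a(s,τ) − Σ_{b≤m} β·φ̄^b(τ)^{1/(β−1)}] dτ)·(Σ_{b≤m} v̄^{ab}(s,σ)·φ̄^b(σ)^{β/(β−1)}) dσ. Then for every a ∈ {1,…,m} and every s ∈ [0,T]: g₀·e^{−γ(T−s)} ≤ φ̄^a(s) ≤ exp(∫_s^T k^a(s,τ)dτ)·ḡ^a(s) + (g₀·e^{−γT})^{β/(β−1)}·∫_s^T exp(∫_s^σ k^a(s,τ)dτ)·(Σ_{b≤m} v̄^{ab}(s,σ)) dσ. In particular, φ̄ is bounded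 above and bounded below away from zero, uniformly on [0,T]. -/
/-! Write `ψ = ∑_b β (φ̄^b)^{1/(β-1)}` and `D(σ) = exp(-∫_s^σ ψ)`. Splitting the exponent, the
equation says that `x = φ̄^a(s)` is a value discounted at rate `ψ`:
`x = D(T) G + ∫_s^T D(σ) F(σ) dσ`, with `G = ḡ^a(s) exp(∫_s^T k^a)`. Since `∫_s^T ψ D = 1 - D(T)`,
a running reward `F ≥ x ψ` forces `x ≥ G`.

Choose `(a₀, s₀)` minimising `φ̄^a(s) e^{-γ s}`, so that `φ̄^b(σ) ≥ φ̄^{a₀}(s₀) e^{γ(σ - s₀)}`.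
As `β/(β-1) = 1 + 1/(β-1)`, the bound `v̄ exp(∫ k) ≥ e^{-γ(σ - s₀)}` turns this into
`F ≥ φ̄^{a₀}(s₀) ψ` at `(a₀, s₀)`, hence `φ̄^{a₀}(s₀) ≥ g₀`, and the lower bound follows at every
point. For the upper bound, `D ≤ 1` and, the exponent `β/(β-1)` being negative,
`(φ̄^b)^{β/(β-1)} ≤ (g₀ e^{-γT})^{β/(β-1)}`.
-/

open Set MeasureTheory Real

theorem continuousOn_primitive_Icc_of_continuousOn {f : ℝ → ℝ} {s T : ℝ} (hsT : s ≤ T)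
    (hf : ContinuousOn f (Icc s T)) :
    ContinuousOn (fun σ => ∫ τ in s..σ, f τ) (Icc s T) := by
  simpa only [uIcc_of_le hsT] using intervalIntegral.continuousOn_primitive_interval'
    (hf.intervalIntegrable_of_Icc hsT) left_mem_uIcc

theorem continuousOn_slice_of_continuousOn_triangle {f : ℝ × ℝ → ℝ} {s T : ℝ}
    (hf : ContinuousOn f {p : ℝ × ℝ | 0 ≤ p.1 ∧ p.1 ≤ p.2 ∧ p.2 ≤ T}) (hs : 0 ≤ s) :
    ContinuousOn (fun σ => f (s, σ)) (Icc s T) :=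
  hf.comp (continuousOn_const.prodMk continuousOn_id) fun _ hσ => ⟨hs, hσ.1, hσ.2⟩

theorem integral_mul_exp_neg_integral {ψ : ℝ → ℝ} {s T : ℝ} (hsT : s ≤ T)
    (hψ : ContinuousOn ψ (Icc s T)) :
    ∫ σ in s..T, ψ σ * exp (-∫ τ in s..σ, ψ τ) = 1 - exp (-∫ τ in s..T, ψ τ) := by
  have hΨ := continuousOn_primitive_Icc_of_continuousOn hsT hψ
  have hderiv : ∀ σ ∈ Ioo s T, HasDerivAt (fun u => -exp (-∫ τ in s..u, ψ τ))
      (ψ σ * exp (-∫ τ in s..σ, ψ τ)) σ := by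
    intro σ hσ
    have hψσ : HasDerivAt (fun u => ∫ τ in s..u, ψ τ) (ψ σ) σ :=
      intervalIntegral.integral_hasDerivAt_right
        ((hψ.mono (Icc_subset_Icc le_rfl hσ.2.le)).intervalIntegrable_of_Icc hσ.1.le)
        ((hψ.mono Ioo_subset_Icc_self).stronglyMeasurableAtFilter isOpen_Ioo σ hσ)
        (hψ.continuousAt (Icc_mem_nhds hσ.1 hσ.2))
    have h := hψσ.fun_neg.exp.fun_neg
    rwa [mul_neg, neg_neg, mul_comm] at h
  rw [intervalIntegral.integral_eq_sub_of_hasDerivAt_of_le hsT hΨ.fun_neg.rexp.fun_neg hderiv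
    ((hψ.mul hΨ.fun_neg.rexp).intervalIntegrable_of_Icc hsT), intervalIntegral.integral_same]
  simp only [neg_zero, exp_zero]
  ring

noncomputable def discountedValue (ψ F : ℝ → ℝ) (g s T : ℝ) : ℝ :=
  exp (-∫ τ in s..T, ψ τ) * g + ∫ σ in s..T, exp (-∫ τ in s..σ, ψ τ) * F σ

theorem le_of_eq_discountedValue {ψ F : ℝ → ℝ} {g x s T : ℝ} (hsT : s ≤ T)
    (hψ : ContinuousOn ψ (Icc s T))
    (hF : IntervalIntegrable (fun σ => exp (-∫ τ in s..σ, ψ τ) * F σ) volume s T)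
    (hψF : ∀ σ ∈ Icc s T, x * ψ σ ≤ F σ) (hx : x = discountedValue ψ F g s T) : g ≤ x := by
  have hΨ := continuousOn_primitive_Icc_of_continuousOn hsT hψ
  have hrunning : x * (1 - exp (-∫ τ in s..T, ψ τ)) ≤
      ∫ σ in s..T, exp (-∫ τ in s..σ, ψ τ) * F σ := by
    rw [← integral_mul_exp_neg_integral hsT hψ, ← intervalIntegral.integral_const_mul]
    refine intervalIntegral.integral_mono_on hsT
      ((continuousOn_const.mul (hψ.mul hΨ.fun_neg.rexp)).intervalIntegrable_of_Icc hsT) hF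
      fun σ hσ => ?_
    rw [mul_comm (ψ σ), mul_left_comm]
    exact mul_le_mul_of_nonneg_left (hψF σ hσ) (exp_pos _).le
  rw [discountedValue] at hx
  have h : exp (-∫ τ in s..T, ψ τ) * g ≤ exp (-∫ τ in s..T, ψ τ) * x := by linarith
  exact le_of_mul_le_mul_left h (exp_pos _)

theorem discountedValue_le {ψ F H : ℝ → ℝ} {g s T : ℝ} (hsT : s ≤ T)
    (hψ : ∀ σ ∈ Icc s T, 0 ≤ ψ σ) (hg : 0 ≤ g)
    (hF : IntervalIntegrable (fun σ => exp (-∫ τ in s..σ, ψ τ) * F σ) volume s T)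
    (hH : IntervalIntegrable H volume s T) (hFH : ∀ σ ∈ Icc s T, 0 ≤ F σ ∧ F σ ≤ H σ) :
    discountedValue ψ F g s T ≤ g + ∫ σ in s..T, H σ := by
  have hdiscount : ∀ σ ∈ Icc s T, exp (-∫ τ in s..σ, ψ τ) ≤ 1 := fun σ hσ =>
    exp_le_one_iff.2 <| neg_nonpos.2 <| intervalIntegral.integral_nonneg hσ.1
      fun u hu => hψ u ⟨hu.1, hu.2.trans hσ.2⟩
  exact add_le_add (mul_le_of_le_one_left hg (hdiscount T ⟨hsT, le_rfl⟩))
    (intervalIntegral.integral_mono_on hsT hF hH fun σ hσ =>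
      (mul_le_of_le_one_left (hFH σ hσ).1 (hdiscount σ hσ)).trans (hFH σ hσ).2)

theorem exp_integral_sub_mul_add_integral_eq_discountedValue {κ ψ F : ℝ → ℝ} {g s T : ℝ}
    (hsT : s ≤ T) (hκ : ContinuousOn κ (Icc s T)) (hψ : ContinuousOn ψ (Icc s T)) :
    exp (∫ τ in s..T, (κ τ - ψ τ)) * g +
        ∫ σ in s..T, exp (∫ τ in s..σ, (κ τ - ψ τ)) * F σ =
      discountedValue ψ (fun σ => exp (∫ τ in s..σ, κ τ) * F σ)
        (exp (∫ τ in s..T, κ τ) * g) s T := by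
  have hsplit : ∀ σ ∈ Icc s T, exp (∫ τ in s..σ, (κ τ - ψ τ)) =
      exp (-∫ τ in s..σ, ψ τ) * exp (∫ τ in s..σ, κ τ) := fun σ hσ => by
    have hsub : Icc s σ ⊆ Icc s T := Icc_subset_Icc le_rfl hσ.2
    rw [intervalIntegral.integral_sub ((hκ.mono hsub).intervalIntegrable_of_Icc hσ.1)
      ((hψ.mono hsub).intervalIntegrable_of_Icc hσ.1), sub_eq_neg_add, exp_add]
  rw [discountedValue, hsplit T ⟨hsT, le_rfl⟩, mul_assoc]
  congr 1
  refine intervalIntegral.integral_congr fun σ hσ => ?_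
  rw [uIcc_of_le hsT] at hσ
  simp only [hsplit σ hσ, mul_assoc]

theorem exists_forall_le_of_continuousOn {ι α β : Type*} [Finite ι] [TopologicalSpace α]
    [LinearOrder β] [TopologicalSpace β] [ClosedIicTopology β] {f : ι → α → β} {K : Set α}
    (hK : IsCompact K) (hf : ∀ i, ContinuousOn (f i) K) (i : ι) {x : α} (hx : x ∈ K) :
    ∃ j, ∃ y ∈ K, ∀ i, ∀ x ∈ K, f j y ≤ f i x := by
  have hcompact : IsCompact (⋃ i, f i '' K) :=
    isCompact_iUnion fun i => hK.image_of_continuousOn (hf i)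
  obtain ⟨_, hmem, hleast⟩ :=
    hcompact.exists_isLeast ⟨f i x, mem_iUnion_of_mem i (mem_image_of_mem _ hx)⟩
  obtain ⟨j, y, hy, rfl⟩ := mem_iUnion.1 hmem
  exact ⟨j, y, hy, fun i x hx => hleast (mem_iUnion_of_mem i (mem_image_of_mem _ hx))⟩

section

variable {ι : Type*} [Fintype ι] {φ : ι → ℝ → ℝ} {T β p q : ℝ}

theorem continuousOn_sum_mul_rpow (hφc : ∀ b, ContinuousOn (φ b) (Icc 0 T))
    (hφpos : ∀ b, ∀ σ ∈ Icc 0 T, 0 < φ b σ) {w : ι → ℝ → ℝ} {S : Set ℝ} (hS : S ⊆ Icc 0 T)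
    (hw : ∀ b, ContinuousOn (w b) S) (r : ℝ) :
    ContinuousOn (fun σ => ∑ b, w b σ * φ b σ ^ r) S :=
  continuousOn_finsetSum _ fun b _ =>
    (hw b).mul (((hφc b).mono hS).rpow_const fun σ hσ => Or.inl (hφpos b σ (hS hσ)).ne')

theorem intervalIntegrable_exp_neg_integral_mul_sum
    (hφc : ∀ b, ContinuousOn (φ b) (Icc 0 T)) (hφpos : ∀ b, ∀ σ ∈ Icc 0 T, 0 < φ b σ)
    {w : ι → ℝ → ℝ} {s : ℝ} (hs : s ∈ Icc 0 T) (hw : ∀ b, ContinuousOn (w b) (Icc s T)) :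
    IntervalIntegrable (fun σ => exp (-∫ τ in s..σ, ∑ b, β * φ b τ ^ p) *
      ∑ b, w b σ * φ b σ ^ q) volume s T := by
  have hsub : Icc s T ⊆ Icc 0 T := Icc_subset_Icc hs.1 le_rfl
  have hψ := continuousOn_sum_mul_rpow hφc hφpos hsub (fun _ => continuousOn_const (c := β)) p
  exact ((continuousOn_primitive_Icc_of_continuousOn hs.2 hψ).fun_neg.rexp.mul
    (continuousOn_sum_mul_rpow hφc hφpos hsub hw q)).intervalIntegrable_of_Icc hs.2

theorem mul_exp_neg_le_of_eq_discountedValue {G : ι → ℝ → ℝ} {W : ι → ι → ℝ → ℝ → ℝ}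
    {γ g₀ : ℝ} (hβ1 : β ≤ 1) (hγ : 0 ≤ γ) (hg₀ : 0 ≤ g₀) (hpq : q = p + 1)
    (hφc : ∀ b, ContinuousOn (φ b) (Icc 0 T)) (hφpos : ∀ b, ∀ σ ∈ Icc 0 T, 0 < φ b σ)
    (hWc : ∀ a b, ∀ s ∈ Icc 0 T, ContinuousOn (W a b s) (Icc s T))
    (hW : ∀ a b s σ, 0 ≤ s → s ≤ σ → σ ≤ T → exp (-γ * (σ - s)) ≤ W a b s σ)
    (hG : ∀ a, ∀ s ∈ Icc 0 T, g₀ ≤ G a s)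
    (heq : ∀ a, ∀ s ∈ Icc 0 T, φ a s = discountedValue (fun τ => ∑ b, β * φ b τ ^ p)
      (fun σ => ∑ b, W a b s σ * φ b σ ^ q) (G a s) s T)
    {a : ι} {s : ℝ} (hs : s ∈ Icc 0 T) :
    g₀ * exp (-γ * (T - s)) ≤ φ a s := by
  obtain ⟨a₀, s₀, hs₀, hmin⟩ := exists_forall_le_of_continuousOn isCompact_Icc
    (f := fun a σ => φ a σ * exp (-γ * σ)) (fun a => (hφc a).mul (by fun_prop)) a hs
  have hgrowth : ∀ b, ∀ σ ∈ Icc 0 T, φ a₀ s₀ * exp (γ * (σ - s₀)) ≤ φ b σ := by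
    intro b σ hσ
    have h := mul_le_mul_of_nonneg_right (hmin b σ hσ) (exp_pos (γ * σ)).le
    rwa [mul_assoc, mul_assoc, ← exp_add, ← exp_add, show -γ * σ + γ * σ = 0 by ring, exp_zero,
      mul_one, show -γ * s₀ + γ * σ = γ * (σ - s₀) by ring] at h
  have hkey : G a₀ s₀ ≤ φ a₀ s₀ := by
    refine le_of_eq_discountedValue hs₀.2
      (continuousOn_sum_mul_rpow hφc hφpos (Icc_subset_Icc hs₀.1 le_rfl)
        (fun _ => continuousOn_const) p)
      (intervalIntegrable_exp_neg_integral_mul_sum hφc hφpos hs₀ (hWc a₀ · s₀ hs₀))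
      (fun σ hσ => ?_) (heq a₀ s₀ hs₀)
    rw [Finset.mul_sum]
    refine Finset.sum_le_sum fun b _ => ?_
    have hσ' : σ ∈ Icc 0 T := ⟨hs₀.1.trans hσ.1, hσ.2⟩
    have hx := hφpos b σ hσ'
    have hE : exp (γ * (σ - s₀)) * exp (-γ * (σ - s₀)) = 1 := by
      rw [← exp_add, show γ * (σ - s₀) + -γ * (σ - s₀) = 0 by ring, exp_zero]
    have hcoef : φ a₀ s₀ * β ≤ φ b σ * W a₀ b s₀ σ :=
      calc φ a₀ s₀ * β ≤ φ a₀ s₀ * exp (γ * (σ - s₀)) * exp (-γ * (σ - s₀)) := by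
            rw [mul_assoc, hE, mul_one]
            exact mul_le_of_le_one_right (hφpos a₀ s₀ hs₀).le hβ1
        _ ≤ φ b σ * W a₀ b s₀ σ := mul_le_mul (hgrowth b σ hσ') (hW a₀ b s₀ σ hs₀.1 hσ.1 hσ.2)
            (exp_pos _).le hx.le
    rw [hpq, rpow_add hx, rpow_one]
    convert mul_le_mul_of_nonneg_right hcoef (rpow_pos_of_pos hx p).le using 1 <;> ring
  calc g₀ * exp (-γ * (T - s)) ≤ G a₀ s₀ * exp (γ * (s - s₀)) :=
        mul_le_mul (hG a₀ s₀ hs₀) (exp_le_exp.2 (by nlinarith [hs₀.2])) (exp_pos _).le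
          (hg₀.trans (hG a₀ s₀ hs₀))
    _ ≤ φ a₀ s₀ * exp (γ * (s - s₀)) := mul_le_mul_of_nonneg_right hkey (exp_pos _).le
    _ ≤ φ a s := hgrowth a s hs

theorem discountedValue_le_add_mul_integral {w : ι → ℝ → ℝ} {g c s : ℝ} (hβ0 : 0 ≤ β)
    (hq : q ≤ 0) (hc : 0 < c) (hφc : ∀ b, ContinuousOn (φ b) (Icc 0 T))
    (hcφ : ∀ b, ∀ σ ∈ Icc 0 T, c ≤ φ b σ) (hs : s ∈ Icc 0 T)
    (hwc : ∀ b, ContinuousOn (w b) (Icc s T)) (hw : ∀ b, ∀ σ ∈ Icc s T, 0 ≤ w b σ)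
    (hg : 0 ≤ g) :
    discountedValue (fun τ => ∑ b, β * φ b τ ^ p) (fun σ => ∑ b, w b σ * φ b σ ^ q) g s T ≤
      g + c ^ q * ∫ σ in s..T, ∑ b, w b σ := by
  have hφpos : ∀ b, ∀ σ ∈ Icc 0 T, 0 < φ b σ := fun b σ hσ => hc.trans_le (hcφ b σ hσ)
  rw [← intervalIntegral.integral_const_mul]
  refine discountedValue_le hs.2 (fun σ hσ => ?_) hg
    (intervalIntegrable_exp_neg_integral_mul_sum hφc hφpos hs hwc)
    ((continuousOn_const.mul (continuousOn_finsetSum _ fun b _ => hwc b)).intervalIntegrable_of_Icc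
      hs.2)
    (fun σ hσ => ?_)
  · have hσ' : σ ∈ Icc 0 T := ⟨hs.1.trans hσ.1, hσ.2⟩
    exact Finset.sum_nonneg fun b _ => mul_nonneg hβ0 (rpow_pos_of_pos (hφpos b σ hσ') p).le
  · have hσ' : σ ∈ Icc 0 T := ⟨hs.1.trans hσ.1, hσ.2⟩
    refine ⟨Finset.sum_nonneg fun b _ =>
      mul_nonneg (hw b σ hσ) (rpow_pos_of_pos (hφpos b σ hσ') q).le, ?_⟩
    rw [Finset.mul_sum]
    refine Finset.sum_le_sum fun b _ => ?_
    rw [mul_comm (c ^ q)]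
    exact mul_le_mul_of_nonneg_left (rpow_le_rpow_of_nonpos hc (hcφ b σ hσ') hq) (hw b σ hσ)

end

theorem stmt18_integral_equation_bounds_general
    (T : ℝ) (m : ℕ)
    (β γ g₀ : ℝ) (hβ0 : 0 < β) (hβ1 : β < 1) (hγ : 0 < γ) (hg₀ : 0 < g₀)
    (k : Fin m → ℝ → ℝ → ℝ) (gb : Fin m → ℝ → ℝ) (vb : Fin m → Fin m → ℝ → ℝ → ℝ)
    (hkc : ∀ a : Fin m, ContinuousOn (fun p : ℝ × ℝ => k a p.1 p.2)
      {p : ℝ × ℝ | 0 ≤ p.1 ∧ p.1 ≤ p.2 ∧ p.2 ≤ T})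
    (hvc : ∀ a b : Fin m, ContinuousOn (fun p : ℝ × ℝ => vb a b p.1 p.2)
      {p : ℝ × ℝ | 0 ≤ p.1 ∧ p.1 ≤ p.2 ∧ p.2 ≤ T})
    -- `ḡ^a(s) exp(∫_s^T k^a(s,τ) dτ) ≥ g₀`
    (hgb : ∀ a : Fin m, ∀ s ∈ Icc (0 : ℝ) T,
      g₀ ≤ gb a s * Real.exp (∫ τ in s..T, k a s τ))
    -- `v̄^{ab}(s,σ) exp(∫_s^σ k^a(s,τ) dτ) ≥ e^{−γ(σ−s)}`
    (hvb : ∀ a b : Fin m, ∀ s σ : ℝ, 0 ≤ s → s ≤ σ → σ ≤ T →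
      Real.exp (-γ * (σ - s)) ≤ vb a b s σ * Real.exp (∫ τ in s..σ, k a s τ))
    (φ : Fin m → ℝ → ℝ)
    (hφc : ∀ a : Fin m, ContinuousOn (φ a) (Icc 0 T))
    (hφpos : ∀ a : Fin m, ∀ s ∈ Icc (0 : ℝ) T, 0 < φ a s)
    -- the nonlinear integral equation
    (heq : ∀ a : Fin m, ∀ s ∈ Icc (0 : ℝ) T,
      φ a s =
        Real.exp (∫ τ in s..T,
            (k a s τ - ∑ b : Fin m, β * φ b τ ^ (1 / (β - 1)))) * gb a s +
        ∫ σ in s..T,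
          Real.exp (∫ τ in s..σ,
              (k a s τ - ∑ b : Fin m, β * φ b τ ^ (1 / (β - 1)))) *
            (∑ b : Fin m, vb a b s σ * φ b σ ^ (β / (β - 1)))) :
    (∀ a : Fin m, ∀ s ∈ Icc (0 : ℝ) T,
      g₀ * Real.exp (-γ * (T - s)) ≤ φ a s ∧
      φ a s ≤
        Real.exp (∫ τ in s..T, k a s τ) * gb a s +
          (g₀ * Real.exp (-γ * T)) ^ (β / (β - 1)) *
            ∫ σ in s..T,
              Real.exp (∫ τ in s..σ, k a s τ) * (∑ b : Fin m, vb a b s σ)) ∧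
    ∃ c C : ℝ, 0 < c ∧ ∀ a : Fin m, ∀ s ∈ Icc (0 : ℝ) T, c ≤ φ a s ∧ φ a s ≤ C := by
  set W : Fin m → Fin m → ℝ → ℝ → ℝ := fun a b s σ =>
    Real.exp (∫ τ in s..σ, k a s τ) * vb a b s σ
  have hk : ∀ a, ∀ s ∈ Icc 0 T, ContinuousOn (k a s) (Icc s T) := fun a s hs =>
    continuousOn_slice_of_continuousOn_triangle (hkc a) hs.1
  have hWc : ∀ a b, ∀ s ∈ Icc 0 T, ContinuousOn (W a b s) (Icc s T) := fun a b s hs =>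
    (continuousOn_primitive_Icc_of_continuousOn hs.2 (hk a s hs)).rexp.mul
      (continuousOn_slice_of_continuousOn_triangle (hvc a b) hs.1)
  have heq' : ∀ a, ∀ s ∈ Icc 0 T, φ a s = discountedValue
      (fun τ => ∑ b, β * φ b τ ^ (1 / (β - 1))) (fun σ => ∑ b, W a b s σ * φ b σ ^ (β / (β - 1)))
      (Real.exp (∫ τ in s..T, k a s τ) * gb a s) s T := by
    intro a s hs
    rw [heq a s hs, exp_integral_sub_mul_add_integral_eq_discountedValue hs.2 (hk a s hs)
      (continuousOn_sum_mul_rpow hφc hφpos (Icc_subset_Icc hs.1 le_rfl)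
        (fun _ => continuousOn_const) _)]
    simp only [W, Finset.mul_sum, mul_assoc]
  have hW : ∀ a b s σ, 0 ≤ s → s ≤ σ → σ ≤ T → Real.exp (-γ * (σ - s)) ≤ W a b s σ :=
    fun a b s σ h0s hsσ hσT => (hvb a b s σ h0s hsσ hσT).trans_eq (mul_comm _ _)
  have hG : ∀ a, ∀ s ∈ Icc 0 T, g₀ ≤ Real.exp (∫ τ in s..T, k a s τ) * gb a s :=
    fun a s hs => (hgb a s hs).trans_eq (mul_comm _ _)
  have hlow : ∀ a, ∀ s ∈ Icc 0 T, g₀ * Real.exp (-γ * (T - s)) ≤ φ a s := fun a s hs =>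
    mul_exp_neg_le_of_eq_discountedValue hβ1.le hγ.le hg₀.le
      (by field_simp [(sub_neg.2 hβ1).ne]; ring) hφc hφpos hWc hW hG heq' hs
  have hc : ∀ a, ∀ s ∈ Icc 0 T, g₀ * Real.exp (-γ * T) ≤ φ a s := fun a s hs =>
    (mul_le_mul_of_nonneg_left (Real.exp_le_exp.2 (by nlinarith [hs.1])) hg₀.le).trans
      (hlow a s hs)
  refine ⟨fun a s hs => ⟨hlow a s hs, ?_⟩, ?_⟩
  · rw [heq' a s hs]
    refine (discountedValue_le_add_mul_integral (w := fun b => W a b s) hβ0.le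
      (div_neg_of_pos_of_neg hβ0 (sub_neg.2 hβ1)).le (by positivity) hφc hc hs (hWc a · s hs)
      (fun b σ hσ => (Real.exp_pos _).le.trans (hW a b s σ hs.1 hσ.1 hσ.2))
      (hg₀.le.trans (hG a s hs))).trans_eq ?_
    simp only [W, Finset.mul_sum]
  · obtain ⟨C, hC⟩ :=
      (isCompact_iUnion fun a => isCompact_Icc.image_of_continuousOn (hφc a)).bddAbove
    exact ⟨_, C, by positivity, fun a s hs =>
      ⟨hc a s hs, hC (mem_iUnion_of_mem a (mem_image_of_mem _ hs))⟩⟩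

/-- A priori bounds for the diagonal nonlinear integral equation arising
from the power-utility TIC SDG example: if a continuous positive `φ̄ : [0,T] → (0,∞)^m`
satisfies the integral equation, then `g₀ e^{−γ(T−s)} ≤ φ̄^a(s)` and the stated upper
bound holds; in particular `φ̄` is uniformly bounded above and below away from zero. -/
theorem stmt18_integral_equation_bounds
    (T : ℝ) (hT : 0 < T) (m : ℕ) (hm : 0 < m)
    (β γ g₀ : ℝ) (hβ0 : 0 < β) (hβ1 : β < 1) (hγ : 0 < γ) (hg₀ : 0 < g₀)
    (k : Fin m → ℝ → ℝ → ℝ) (gb : Fin m → ℝ → ℝ) (vb : Fin m → Fin m → ℝ → ℝ → ℝ)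
    (hkc : ∀ a : Fin m, ContinuousOn (fun p : ℝ × ℝ => k a p.1 p.2)
      {p : ℝ × ℝ | 0 ≤ p.1 ∧ p.1 ≤ p.2 ∧ p.2 ≤ T})
    (hgc : ∀ a : Fin m, ContinuousOn (gb a) (Icc 0 T))
    (hvc : ∀ a b : Fin m, ContinuousOn (fun p : ℝ × ℝ => vb a b p.1 p.2)
      {p : ℝ × ℝ | 0 ≤ p.1 ∧ p.1 ≤ p.2 ∧ p.2 ≤ T})
    -- `ḡ^a(s) exp(∫_s^T k^a(s,τ) dτ) ≥ g₀`
    (hgb : ∀ a : Fin m, ∀ s ∈ Icc (0 : ℝ) T,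
      g₀ ≤ gb a s * Real.exp (∫ τ in s..T, k a s τ))
    -- `v̄^{ab}(s,σ) exp(∫_s^σ k^a(s,τ) dτ) ≥ e^{−γ(σ−s)}`
    (hvb : ∀ a b : Fin m, ∀ s σ : ℝ, 0 ≤ s → s ≤ σ → σ ≤ T →
      Real.exp (-γ * (σ - s)) ≤ vb a b s σ * Real.exp (∫ τ in s..σ, k a s τ))
    (φ : Fin m → ℝ → ℝ)
    (hφc : ∀ a : Fin m, ContinuousOn (φ a) (Icc 0 T))
    (hφpos : ∀ a : Fin m, ∀ s ∈ Icc (0 : ℝ) T, 0 < φ a s)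
    -- the nonlinear integral equation
    (heq : ∀ a : Fin m, ∀ s ∈ Icc (0 : ℝ) T,
      φ a s =
        Real.exp (∫ τ in s..T,
            (k a s τ - ∑ b : Fin m, β * φ b τ ^ (1 / (β - 1)))) * gb a s +
        ∫ σ in s..T,
          Real.exp (∫ τ in s..σ,
              (k a s τ - ∑ b : Fin m, β * φ b τ ^ (1 / (β - 1)))) *
            (∑ b : Fin m, vb a b s σ * φ b σ ^ (β / (β - 1)))) :
    (∀ a : Fin m, ∀ s ∈ Icc (0 : ℝ) T,
      g₀ * Real.exp (-γ * (T - s)) ≤ φ a s ∧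
      φ a s ≤
        Real.exp (∫ τ in s..T, k a s τ) * gb a s +
          (g₀ * Real.exp (-γ * T)) ^ (β / (β - 1)) *
            ∫ σ in s..T,
              Real.exp (∫ τ in s..σ, k a s τ) * (∑ b : Fin m, vb a b s σ)) ∧
    ∃ c C : ℝ, 0 < c ∧ ∀ a : Fin m, ∀ s ∈ Icc (0 : ℝ) T, c ≤ φ a s ∧ φ a s ≤ C :=
  stmt18_integral_equation_bounds_general T m β γ g₀ hβ0 hβ1 hγ hg₀ k gb vb hkc hvc hgb hvb φ hφc
    hφpos heq
end
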